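/- arXiv:1902.07513 — 4 statements merged into one kernel-verified Lean document; each statement's English description precedes it below -/
import Mathlib

section
/- Let ε > 0 and let η ∈ C_c^∞(ℝ) satisfy η ≥ 0, ∫_ℝ η = 1 and η(x) = 0 for every x < 0 (i.e. η is supported on [0,ε] ⊂ [0,∞)). Then the travelling shock ρ^(D)(t,x) = 1 if x ≤ t, ρ^(D)(t,x) = 0 if x > t, is a weak solution of the nonlocal Burgers equation ∂_t ρ + ∂_x(ρ·(ρ∗η)) = 0 with initial datum ρ̄^(D)(x) = 1_{(−∞,0]}(x). -/
open MeasureTheory Set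

/-- The convolution in the space variable: `(ρ∗η)(t,x) = ∫ ρ(t, x−y) η(y) dy`. -/
noncomputable def nlConv (η : ℝ → ℝ) (ρ : ℝ → ℝ → ℝ) (t x : ℝ) : ℝ :=
  ∫ y : ℝ, ρ t (x - y) * η y

/-- `ρ` is a weak solution of the nonlocal Burgers equation
`∂_t ρ + ∂_x (ρ·(ρ∗η)) = 0` with initial datum `ρ₀`. -/
def IsNonlocalWeakSol (η : ℝ → ℝ) (ρ : ℝ → ℝ → ℝ) (ρ₀ : ℝ → ℝ) : Prop :=
  ∀ φ : ℝ → ℝ → ℝ, ContDiff ℝ (⊤ : ℕ∞) (Function.uncurry φ) →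
      HasCompactSupport (Function.uncurry φ) →
    (∫ t in Ioi (0:ℝ), ∫ x : ℝ,
        (ρ t x * deriv (fun s => φ s x) t
          + ρ t x * nlConv η ρ t x * deriv (fun y => φ t y) x))
      + (∫ x : ℝ, ρ₀ x * φ 0 x) = 0

/-- The travelling shock of Example D. -/
noncomputable def rhoD (t x : ℝ) : ℝ := if x ≤ t then 1 else 0

/-- The initial datum of Example D. -/
noncomputable def rhoD0 (x : ℝ) : ℝ := indicator (Iic (0 : ℝ)) (fun _ => (1 : ℝ)) x

/-- Auxiliary: total derivative of `t ↦ φ(t, u + t)`. -/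
noncomputable def shockG (Φ : ℝ × ℝ → ℝ) (u t : ℝ) : ℝ := fderiv ℝ Φ (t, u + t) (1, 1)

/-- For a smooth nonnegative convolution kernel of unit mass supported on `[0,ε]`
(i.e. vanishing on the negative real line), the travelling shock `ρ^(D)` is a weak
solution of the nonlocal Burgers equation with initial datum `ρ̄^(D) = 1_{(−∞,0]}`. -/
theorem rhoD_isNonlocalWeakSolution (ε : ℝ) (hε : 0 < ε) (η : ℝ → ℝ)
    (hη_smooth : ContDiff ℝ (⊤ : ℕ∞) η) (hη_supp : HasCompactSupport η)
    (hη_nonneg : ∀ x, 0 ≤ η x) (hη_mass : (∫ x : ℝ, η x) = 1)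
    (hη_neg : ∀ x : ℝ, x < 0 → η x = 0) (hη_eps : ∀ x : ℝ, ε < x → η x = 0) :
    IsNonlocalWeakSol η rhoD rhoD0 := by
  intro φ hφ hφs
  set Φ := Function.uncurry φ with hΦdef
  have hΦdiff : Differentiable ℝ Φ := hφ.differentiable (by simp)
  set G : ℝ → ℝ → ℝ := shockG Φ with hGdef
  -- the product `ρ · (ρ∗η)` collapses to `ρ`
  have hprod : ∀ t x : ℝ, rhoD t x * nlConv η rhoD t x = rhoD t x := by
    intro t x
    by_cases hx : x ≤ t
    · have hconv : nlConv η rhoD t x = 1 := by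
        have heq : (fun y => rhoD t (x - y) * η y) = η := by
          funext y
          by_cases hy : η y = 0
          · simp [hy]
          · have hy0 : 0 ≤ y := by
              by_contra h
              exact hy (hη_neg y (lt_of_not_ge h))
            have hxy : x - y ≤ t := by linarith
            simp [rhoD, hxy]
        rw [nlConv, heq, hη_mass]
      simp [hconv]
    · simp [rhoD, hx]
  -- derivative facts
  have hd1 : ∀ t x : ℝ, HasDerivAt (fun s => φ s x) (fderiv ℝ Φ (t, x) (1, 0)) t := by
    intro t x
    have h1 : HasDerivAt (fun s : ℝ => (s, x)) ((1 : ℝ), (0 : ℝ)) t :=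
      (hasDerivAt_id t).prodMk (hasDerivAt_const t x)
    exact ((hΦdiff (t, x)).hasFDerivAt).comp_hasDerivAt t h1
  have hd2 : ∀ t x : ℝ, HasDerivAt (fun y => φ t y) (fderiv ℝ Φ (t, x) (0, 1)) x := by
    intro t x
    have h1 : HasDerivAt (fun y : ℝ => (t, y)) ((0 : ℝ), (1 : ℝ)) x :=
      (hasDerivAt_const x t).prodMk (hasDerivAt_id x)
    exact ((hΦdiff (t, x)).hasFDerivAt).comp_hasDerivAt x h1
  have hd3 : ∀ u t : ℝ, HasDerivAt (fun s => φ s (u + s)) (G u t) t := by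
    intro u t
    have h1 : HasDerivAt (fun s : ℝ => (s, u + s)) ((1 : ℝ), (1 : ℝ)) t := by
      have h2 := (hasDerivAt_const t u).add (hasDerivAt_id t)
      simpa using (hasDerivAt_id t).prodMk h2
    exact ((hΦdiff (t, u + t)).hasFDerivAt).comp_hasDerivAt t h1
  have hsplit : ∀ p : ℝ × ℝ, fderiv ℝ Φ p (1 : ℝ × ℝ)
      = fderiv ℝ Φ p (1, 0) + fderiv ℝ Φ p (0, 1) := by
    intro p
    have h : (1 : ℝ × ℝ) = ((1 : ℝ), (0 : ℝ)) + ((0 : ℝ), (1 : ℝ)) := by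
      simp [Prod.ext_iff]
    rw [h, map_add]
  -- continuity and support bounds
  have hGcont : Continuous fun p : ℝ × ℝ => G p.1 p.2 := by
    have h1 : Continuous fun p : ℝ × ℝ => ((p.2 : ℝ), p.1 + p.2) := by fun_prop
    have h2 : Continuous (fderiv ℝ Φ) := hφ.continuous_fderiv (by simp)
    exact (h2.comp h1).clm_apply continuous_const
  obtain ⟨R, hR⟩ := hφs.isBounded.subset_closedBall 0
  have hout : ∀ q : ℝ × ℝ, R < |q.1| ∨ R < |q.2| → q ∉ tsupport Φ := by
    intro q hq hmem
    have h := hR hmem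
    rw [Metric.mem_closedBall, dist_zero_right, Prod.norm_def, Real.norm_eq_abs,
      Real.norm_eq_abs] at h
    rcases hq with h1 | h1
    · exact absurd (le_trans (le_max_left _ _) h) (not_le.mpr h1)
    · exact absurd (le_trans (le_max_right _ _) h) (not_le.mpr h1)
  have hφzero : ∀ t x : ℝ, (t, x) ∉ tsupport Φ → φ t x = 0 := by
    intro t x h
    exact image_eq_zero_of_notMem_tsupport (f := Φ) h
  have hGzero : ∀ u t : ℝ, (t, u + t) ∉ tsupport Φ → G u t = 0 := by
    intro u t hmem
    have hz : fderiv ℝ Φ (t, u + t) = 0 := by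
      by_contra h
      exact hmem (support_fderiv_subset ℝ h)
    simp [hGdef, shockG, hz]
  have hGsupp : HasCompactSupport fun p : ℝ × ℝ => G p.1 p.2 := by
    refine HasCompactSupport.intro (isCompact_closedBall (0 : ℝ × ℝ) (2 * |R| + 2)) ?_
    rintro ⟨u, t⟩ hp
    simp only [Metric.mem_closedBall, dist_zero_right, Prod.norm_def, Real.norm_eq_abs,
      max_le_iff, not_and_or, not_le] at hp
    have hR0 : R ≤ |R| := le_abs_self R
    have hRa : (0:ℝ) ≤ |R| := abs_nonneg R
    have habs : |u| ≤ |u + t| + |t| := by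
      have h := abs_add_le (u + t) (-t)
      simpa using h
    refine hGzero u t (hout (t, u + t) ?_)
    rcases hp with h | h
    · by_cases ht : R < |t|
      · exact Or.inl ht
      · refine Or.inr (show R < |u + t| from ?_)
        push_neg at ht
        linarith
    · exact Or.inl (show R < |t| by linarith)
  -- rewrite the inner integral
  have hinner : ∀ t : ℝ,
      (∫ x : ℝ, (rhoD t x * deriv (fun s => φ s x) t
        + rhoD t x * nlConv η rhoD t x * deriv (fun y => φ t y) x))
      = ∫ u : ℝ, indicator (Iic (0:ℝ)) (fun v => G v t) u := by
    intro t
    have e1 : ∀ x : ℝ, rhoD t x * deriv (fun s => φ s x) t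
        + rhoD t x * nlConv η rhoD t x * deriv (fun y => φ t y) x
        = indicator (Iic t) (fun x => fderiv ℝ Φ (t, x) (1, 1)) x := by
      intro x
      rw [hprod t x, (hd1 t x).deriv, (hd2 t x).deriv]
      by_cases hx : x ≤ t
      · simp [rhoD, hx, indicator, hsplit (t, x)]; rw [← map_add]; simp
      · simp [rhoD, hx, indicator]
    calc (∫ x : ℝ, (rhoD t x * deriv (fun s => φ s x) t
          + rhoD t x * nlConv η rhoD t x * deriv (fun y => φ t y) x))
        = ∫ x : ℝ, indicator (Iic t) (fun x => fderiv ℝ Φ (t, x) (1, 1)) x :=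
          integral_congr_ae (Filter.Eventually.of_forall e1)
      _ = ∫ u : ℝ, indicator (Iic t) (fun x => fderiv ℝ Φ (t, x) (1, 1)) (u + t) :=
          (integral_add_right_eq_self _ t).symm
      _ = ∫ u : ℝ, indicator (Iic (0:ℝ)) (fun v => G v t) u := by
          refine integral_congr_ae (Filter.Eventually.of_forall fun u => ?_)
          have h2 : u + t ≤ t ↔ u ≤ 0 := by constructor <;> intro <;> linarith
          simp [indicator, h2, hGdef, shockG]
  -- Fubini justification
  have hGint : Integrable (fun p : ℝ × ℝ => G p.2 p.1) (volume : Measure (ℝ × ℝ)) := by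
    have hc : Continuous fun p : ℝ × ℝ => G p.2 p.1 :=
      hGcont.comp continuous_swap
    have hs : HasCompactSupport fun p : ℝ × ℝ => G p.2 p.1 := by
      have h : (fun p : ℝ × ℝ => G p.2 p.1)
          = (fun p : ℝ × ℝ => G p.1 p.2) ∘ (Homeomorph.prodComm ℝ ℝ) := rfl
      rw [h]
      exact hGsupp.comp_homeomorph _
    exact hc.integrable_of_hasCompactSupport hs
  have hmeas : ((volume : Measure ℝ).restrict (Ioi 0)).prod (volume : Measure ℝ)
      = (volume : Measure (ℝ × ℝ)).restrict ((Ioi 0) ×ˢ univ) := by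
    have h := Measure.prod_restrict (μ := (volume : Measure ℝ)) (ν := (volume : Measure ℝ))
      (Ioi 0) univ
    simpa [Measure.restrict_univ, ← Measure.volume_eq_prod] using h
  have hJint : Integrable
      (Function.uncurry fun t u => indicator (Iic (0:ℝ)) (fun v => G v t) u)
      (((volume : Measure ℝ).restrict (Ioi 0)).prod volume) := by
    have h1 : (Function.uncurry fun t u => indicator (Iic (0:ℝ)) (fun v => G v t) u)
        = indicator (univ ×ˢ Iic (0:ℝ)) (fun p : ℝ × ℝ => G p.2 p.1) := by
      funext p
      rcases p with ⟨t, u⟩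
      by_cases hu : u ≤ 0 <;> simp [Function.uncurry, indicator, hu]
    rw [h1, hmeas]
    exact ((hGint.indicator (MeasurableSet.univ.prod measurableSet_Iic))).restrict
  -- FTC in the time variable
  have hFTC : ∀ u : ℝ, (∫ t in Ioi (0:ℝ), G u t) = -(φ 0 u) := by
    intro u
    have hderiv : ∀ t ∈ Ici (0:ℝ), HasDerivAt (fun s => φ s (u + s)) (G u t) t :=
      fun t _ => hd3 u t
    have hc : Continuous fun t => G u t := hGcont.comp (by fun_prop : Continuous fun t : ℝ => (u, t))
    have hcs : HasCompactSupport fun t => G u t := by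
      refine HasCompactSupport.intro (isCompact_Icc (a := -(|R| + 1)) (b := |R| + 1)) ?_
      intro t ht
      rw [mem_Icc, not_and_or, not_le, not_le] at ht
      refine hGzero u t (hout (t, u + t) (Or.inl (show R < |t| from ?_)))
      rcases ht with h | h
      · have h1 := neg_abs_le t
        have h2 := le_abs_self R
        linarith
      · have h1 := le_abs_self t
        have h2 := le_abs_self R
        linarith
    have hint : IntegrableOn (fun t => G u t) (Ioi (0:ℝ)) :=
      (hc.integrable_of_hasCompactSupport hcs).integrableOn
    have htend : Filter.Tendsto (fun s => φ s (u + s)) Filter.atTop (nhds 0) := by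
      have hev : ∀ᶠ s in Filter.atTop, φ s (u + s) = 0 := by
        filter_upwards [Filter.eventually_gt_atTop R] with s hs
        refine hφzero s (u + s) (hout (s, u + s) (Or.inl (show R < |s| from ?_)))
        have := le_abs_self s
        linarith
      exact Filter.Tendsto.congr' (hev.mono fun s h => h.symm) tendsto_const_nhds
    have := integral_Ioi_of_hasDerivAt_of_tendsto' hderiv hint htend
    simpa using this
  -- putting everything together
  have hmain : (∫ t in Ioi (0:ℝ), ∫ x : ℝ,
        (rhoD t x * deriv (fun s => φ s x) t
          + rhoD t x * nlConv η rhoD t x * deriv (fun y => φ t y) x))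
      = ∫ u : ℝ, indicator (Iic (0:ℝ)) (fun v => -(φ 0 v)) u := by
    calc (∫ t in Ioi (0:ℝ), ∫ x : ℝ,
          (rhoD t x * deriv (fun s => φ s x) t
            + rhoD t x * nlConv η rhoD t x * deriv (fun y => φ t y) x))
        = ∫ t in Ioi (0:ℝ), ∫ u : ℝ, indicator (Iic (0:ℝ)) (fun v => G v t) u :=
          integral_congr_ae (Filter.Eventually.of_forall fun t => hinner t)
      _ = ∫ u : ℝ, ∫ t in Ioi (0:ℝ), indicator (Iic (0:ℝ)) (fun v => G v t) u :=
          integral_integral_swap hJint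
      _ = ∫ u : ℝ, indicator (Iic (0:ℝ)) (fun v => -(φ 0 v)) u := by
          refine integral_congr_ae (Filter.Eventually.of_forall fun u => ?_)
          show (∫ t in Ioi (0:ℝ), indicator (Iic (0:ℝ)) (fun v => G v t) u)
            = indicator (Iic (0:ℝ)) (fun v => -(φ 0 v)) u
          by_cases hu : u ≤ 0
          · have h1 : ∀ t : ℝ, indicator (Iic (0:ℝ)) (fun v => G v t) u = G u t := by
              intro t
              exact indicator_of_mem (mem_Iic.mpr hu) _
            rw [show (fun t => indicator (Iic (0:ℝ)) (fun v => G v t) u) = fun t => G u t from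
              funext h1]
            rw [hFTC u, indicator_of_mem (mem_Iic.mpr hu)]
          · simp [indicator, hu]
  rw [hmain]
  have h0 : ∀ x : ℝ, rhoD0 x * φ 0 x = indicator (Iic (0:ℝ)) (fun v => φ 0 v) x := by
    intro x
    by_cases hx : x ≤ 0 <;> simp [rhoD0, indicator, hx]
  rw [show (fun x : ℝ => rhoD0 x * φ 0 x) = fun x => indicator (Iic (0:ℝ)) (fun v => φ 0 v) x from
    funext h0]
  have hneg : (fun u : ℝ => indicator (Iic (0:ℝ)) (fun v => -(φ 0 v)) u)
      = fun u => -(indicator (Iic (0:ℝ)) (fun v => φ 0 v) u) := by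
    funext u
    by_cases hu : u ≤ 0 <;> simp [indicator, hu]
  rw [hneg, integral_neg, neg_add_cancel]
end

section
/- Let ρ^(A):[0,∞)×ℝ→ℝ be defined by: for 0 ≤ t ≤ 1/2, ρ^(A)(t,x) = (x+2)/(2t+1) if x ∈ [−2, 2t−1], ρ^(A)(t,x) = 1 if x ∈ (2t−1, 0), ρ^(A)(t,x) = −1 if x ∈ (0, 1−2t), ρ^(A)(t,x) = (x−2)/(2t+1) if x ∈ [1−2t, 2], and 0 otherwise; for t > 1/2, ρ^(A)(t,x) = (x+2)/(2t+1) if x ∈ [−2, 0), ρ^(A)(t,x) = (x−2)/(2t+1) if x ∈ (0, 2], and 0 otherwise. Fix T > 0. Then there exists no sequence (f_n) of integrable functions f_n:[0,T]×(−∞,0]→ℝ such that ∫_{−∞}^0 f_n(t,y) dy = 3/2 for almost every t ∈ [0,T] for every n, and f_n → ρ^(A) in L¹([0,T]×(−∞,0]) as n → ∞. -/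
open MeasureTheory Set Filter

/-- The explicit entropy admissible solution of Example A. -/
noncomputable def rhoA (t x : ℝ) : ℝ :=
  if t ≤ 1/2 then
    if x ∈ Icc (-2 : ℝ) (2*t - 1) then (x + 2) / (2*t + 1)
    else if x ∈ Ioo (2*t - 1) (0 : ℝ) then 1
    else if x ∈ Ioo (0 : ℝ) (1 - 2*t) then -1
    else if x ∈ Icc (1 - 2*t) (2 : ℝ) then (x - 2) / (2*t + 1)
    else 0
  else
    if x ∈ Ico (-2 : ℝ) 0 then (x + 2) / (2*t + 1)
    else if x ∈ Ioc (0 : ℝ) 2 then (x - 2) / (2*t + 1)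
    else 0

/-!
For `0 ≤ c ≤ t`, the profile of `ρ^(A)(t,·)` on the negative half-line lies below
`min 1 ((y+2)/(2c+1))` on `[-2,0]`, whose mass is `3/2 - c` when `c ≤ 1/2`. Hence the mass of
`ρ^(A)(t,·)` on `(-∞,0]` falls short of `3/2` by at least `min t (1/2)`. Integrating in `y` is a
contraction for the `L¹` norm (Fubini), so every function of mass `3/2` stays at `L¹` distance at
least `∫₀ᵀ min t (1/2) dt > 0` from `ρ^(A)`.
-/

theorem integral_norm_integral_le_integral_norm {α β E : Type*} [MeasurableSpace α]
    [MeasurableSpace β] [NormedAddCommGroup E] [NormedSpace ℝ E]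
    {μ : Measure α} {ν : Measure β} [SFinite μ] [SFinite ν] {H : α × β → E}
    (hH : Integrable H (μ.prod ν)) :
    ∫ x, ‖∫ y, H (x, y) ∂ν‖ ∂μ ≤ ∫ p, ‖H p‖ ∂(μ.prod ν) := by
  rw [integral_prod _ hH.norm]
  exact integral_mono hH.integral_prod_left.norm hH.norm.integral_prod_left
    fun x => norm_integral_le_integral_norm _

theorem measurable_uncurry_rhoA : Measurable (Function.uncurry rhoA) := by
  unfold rhoA Function.uncurry
  repeat' apply Measurable.ite
  all_goals first | fun_prop | measurability

theorem abs_rhoA_le_one {t : ℝ} (ht : 0 ≤ t) (y : ℝ) : |rhoA t y| ≤ 1 := by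
  have h0 : (0 : ℝ) < 2 * t + 1 := by linarith
  unfold rhoA
  split_ifs <;> simp only [mem_Icc, mem_Ioo, mem_Ico, mem_Ioc, abs_div, abs_of_pos h0,
    div_le_one h0, abs_le] at * <;> grind

theorem rhoA_of_lt {t y : ℝ} (ht : 0 ≤ t) (hy : y < -2) : rhoA t y = 0 := by
  unfold rhoA
  split_ifs <;> simp only [mem_Icc, mem_Ioo, mem_Ico, mem_Ioc] at * <;> grind

theorem integrableOn_rhoA {t : ℝ} (ht : 0 ≤ t) : IntegrableOn (rhoA t) (Iic 0) := by
  refine IntegrableOn.of_forall_sdiff_eq_zero (s := Icc (-2) 0) ?_ measurableSet_Iic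
    fun y hy => ?_
  · exact Measure.integrableOn_of_bounded measure_Icc_lt_top.ne
      (measurable_uncurry_rhoA.comp measurable_prodMk_left).aestronglyMeasurable
      (.of_forall fun y => abs_rhoA_le_one ht y)
  · exact rhoA_of_lt ht (by grind)

theorem integrableOn_uncurry_rhoA (T : ℝ) :
    IntegrableOn (Function.uncurry rhoA) (Icc 0 T ×ˢ Iic 0) := by
  refine IntegrableOn.of_forall_sdiff_eq_zero (s := Icc 0 T ×ˢ Icc (-2) 0) ?_
    (measurableSet_Icc.prod measurableSet_Iic) ?_
  · refine Measure.integrableOn_of_bounded (M := 1) ?_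
      measurable_uncurry_rhoA.aestronglyMeasurable ?_
    · exact (isCompact_Icc.prod isCompact_Icc).measure_lt_top.ne
    · exact (ae_restrict_mem (measurableSet_Icc.prod measurableSet_Icc)).mono
        fun p hp => abs_rhoA_le_one hp.1.1 p.2
  · rintro ⟨t, y⟩ ⟨⟨ht, hy⟩, hy'⟩
    exact rhoA_of_lt ht.1 (by grind)

/-- For `0 ≤ c ≤ 1/2` this is `ρ^(A)(c,·)` on `[-2, 0)`. -/
noncomputable def rhoAEnvelope (c : ℝ) : ℝ → ℝ :=
  (Icc (-2) 0).indicator fun y => min 1 ((y + 2) / (2 * c + 1))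

theorem rhoA_le_min {t y : ℝ} (ht : 0 ≤ t) (hy : y ∈ Icc (-2) 0) :
    rhoA t y ≤ min 1 ((y + 2) / (2 * t + 1)) := by
  have ht1 : (0 : ℝ) < 2 * t + 1 := by linarith
  rw [le_min_iff, le_div_iff₀ ht1]
  unfold rhoA
  split_ifs <;> simp only [mem_Icc, mem_Ioo, mem_Ico, mem_Ioc, div_mul_cancel₀ _ ht1.ne',
    div_le_one ht1] at * <;> grind

theorem rhoA_le_rhoAEnvelope {c t y : ℝ} (hc : 0 ≤ c) (hct : c ≤ t) (hy : y ≤ 0) :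
    rhoA t y ≤ rhoAEnvelope c y := by
  unfold rhoAEnvelope
  by_cases hy2 : -2 ≤ y
  · rw [indicator_of_mem (mem_Icc.2 ⟨hy2, hy⟩)]
    refine (rhoA_le_min (hc.trans hct) ⟨hy2, hy⟩).trans ?_
    gcongr
    linarith
  · rw [indicator_of_notMem (fun h => hy2 h.1), rhoA_of_lt (hc.trans hct) (not_le.1 hy2)]

theorem integral_rhoAEnvelope {c : ℝ} (hc : 0 ≤ c) (hc' : c ≤ 1 / 2) :
    ∫ y in Iic 0, rhoAEnvelope c y = 3 / 2 - c := by
  have hc1 : (0 : ℝ) < 2 * c + 1 := by linarith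
  have hcont : Continuous fun y : ℝ => min 1 ((y + 2) / (2 * c + 1)) := by fun_prop
  have hramp : ∫ y in (-2)..(2 * c - 1), min 1 ((y + 2) / (2 * c + 1))
      = ∫ y in (-2)..(2 * c - 1), (y + 2) / (2 * c + 1) := by
    refine intervalIntegral.integral_congr fun y hy => min_eq_right ?_
    rw [uIcc_of_le (by linarith)] at hy
    rw [div_le_one hc1]
    linarith [hy.2]
  have hplateau : ∫ y in (2 * c - 1)..0, min 1 ((y + 2) / (2 * c + 1))
      = ∫ _ in (2 * c - 1)..0, (1 : ℝ) := by
    refine intervalIntegral.integral_congr fun y hy => min_eq_left ?_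
    rw [uIcc_of_le (by linarith)] at hy
    rw [le_div_iff₀ hc1]
    linarith [hy.1]
  rw [rhoAEnvelope, setIntegral_indicator measurableSet_Icc,
    inter_eq_right.2 Icc_subset_Iic_self, integral_Icc_eq_integral_Ioc,
    ← intervalIntegral.integral_of_le (by norm_num),
    ← intervalIntegral.integral_add_adjacent_intervals (b := 2 * c - 1)
      (hcont.intervalIntegrable _ _) (hcont.intervalIntegrable _ _), hramp, hplateau,
    intervalIntegral.integral_div,
    intervalIntegral.integral_add intervalIntegral.intervalIntegrable_id intervalIntegrable_const,
    integral_id,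
    intervalIntegral.integral_const, intervalIntegral.integral_const, smul_eq_mul, smul_eq_mul]
  field_simp
  ring

theorem integral_rhoA_le {c t : ℝ} (hc : 0 ≤ c) (hc' : c ≤ 1 / 2) (hct : c ≤ t) :
    ∫ y in Iic 0, rhoA t y ≤ 3 / 2 - c := by
  have henv : Integrable (rhoAEnvelope c) := by
    unfold rhoAEnvelope
    rw [integrable_indicator_iff measurableSet_Icc]
    exact (by fun_prop : Continuous fun y : ℝ => min 1 ((y + 2) / (2 * c + 1))).integrableOn_Icc
  calc ∫ y in Iic 0, rhoA t y ≤ ∫ y in Iic 0, rhoAEnvelope c y :=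
        setIntegral_mono_on (integrableOn_rhoA (hc.trans hct)) henv.integrableOn
          measurableSet_Iic fun y hy => rhoA_le_rhoAEnvelope hc hct hy
    _ = 3 / 2 - c := integral_rhoAEnvelope hc hc'

theorem integral_min_le_integral_abs_sub_rhoA {T : ℝ} {g : ℝ → ℝ → ℝ}
    (hg : IntegrableOn (Function.uncurry g) (Icc 0 T ×ˢ Iic 0))
    (hmass : ∀ᵐ t ∂volume.restrict (Icc 0 T), ∫ y in Iic 0, g t y = 3 / 2) :
    ∫ t in Icc 0 T, min t (1 / 2) ≤
      ∫ p in Icc 0 T ×ˢ Iic 0, |Function.uncurry g p - Function.uncurry rhoA p| := by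
  have hvol : volume.restrict (Icc (0 : ℝ) T ×ˢ Iic (0 : ℝ)) =
      (volume.restrict (Icc 0 T)).prod (volume.restrict (Iic 0)) := by
    rw [Measure.volume_eq_prod, Measure.prod_restrict]
  have hdiff : Integrable (Function.uncurry g - Function.uncurry rhoA)
      ((volume.restrict (Icc 0 T)).prod (volume.restrict (Iic 0))) := by
    rw [← hvol]
    exact hg.sub (integrableOn_uncurry_rhoA T)
  have hslices : ∀ᵐ t ∂volume.restrict (Icc 0 T), IntegrableOn (g t) (Iic 0) := by
    rw [IntegrableOn, hvol] at hg
    exact hg.prod_right_ae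
  rw [hvol]
  refine le_trans ?_ (integral_norm_integral_le_integral_norm hdiff)
  refine integral_mono_ae (by fun_prop : Continuous fun t : ℝ => min t (1 / 2)).integrableOn_Icc
    hdiff.integral_prod_left.norm ?_
  filter_upwards [hmass, hslices, ae_restrict_mem measurableSet_Icc] with t hgt hslice ht
  calc min t (1 / 2) ≤ 3 / 2 - ∫ y in Iic 0, rhoA t y := by
        linarith [integral_rhoA_le (le_min ht.1 (by norm_num)) (min_le_right t (1 / 2))
          (min_le_left t (1 / 2))]
    _ = ∫ y in Iic 0, (g t y - rhoA t y) := by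
        rw [integral_sub hslice (integrableOn_rhoA ht.1), hgt]
    _ ≤ ‖∫ y in Iic 0, (g t y - rhoA t y)‖ := Real.le_norm_self _

/-- There is no sequence of integrable functions on `[0,T]×(−∞,0]`, each of which has
mass `3/2` on the negative half-line for almost every time `t ∈ [0,T]`, converging to
`ρ^(A)` in `L¹([0,T]×(−∞,0])`. -/
theorem no_mass_conserving_L1_approximation (T : ℝ) (hT : 0 < T) :
    ¬ ∃ f : ℕ → ℝ → ℝ → ℝ,
      (∀ n, IntegrableOn (Function.uncurry (f n)) (Icc (0:ℝ) T ×ˢ Iic (0:ℝ))) ∧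
      (∀ n, ∀ᵐ t ∂(volume.restrict (Icc (0:ℝ) T)),
        (∫ y in Iic (0:ℝ), f n t y) = 3/2) ∧
      Tendsto
        (fun n => ∫ p in Icc (0:ℝ) T ×ˢ Iic (0:ℝ),
          |Function.uncurry (f n) p - Function.uncurry rhoA p|)
        atTop (nhds 0) := by
  rintro ⟨f, hf_int, hf_mass, hf_lim⟩
  have hgap_pos : 0 < ∫ t in Icc 0 T, min t (1 / 2) := by
    rw [integral_Icc_eq_integral_Ioc, ← intervalIntegral.integral_of_le hT.le]
    refine intervalIntegral.intervalIntegral_pos_of_pos_on ?_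
      (fun t ht => lt_min ht.1 one_half_pos) hT
    exact (continuous_id.min continuous_const).intervalIntegrable _ _
  have hgap_le : ∀ n, ∫ t in Icc 0 T, min t (1 / 2) ≤
      ∫ p in Icc 0 T ×ˢ Iic 0, |Function.uncurry (f n) p - Function.uncurry rhoA p| :=
    fun n => integral_min_le_integral_abs_sub_rhoA (hf_int n) (hf_mass n)
  exact hgap_pos.not_ge (ge_of_tendsto hf_lim (.of_forall hgap_le))
end

section
/- Let ε > 0 and let η ∈ C_c^∞(ℝ) satisfy η ≥ 0, ∫_ℝ η = 1 and η(x) = 0 for every x > 0 (i.e. η is supported on [−ε,0]). Let ρ ∈ C¹([0,∞)×ℝ) be a bounded classical solution of the nonlocal Burgers equation ∂_t ρ + ∂_x(ρ·(ρ∗η)) = 0 such that ρ(0,x) = 0 for every x ≥ 0. Then ρ(t,x) = 0 for every t ≥ 0 and every x ≥ 0. -/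
open MeasureTheory Set Real Filter Topology Convolution intervalIntegral

private lemma hasDerivAt_G {δ : ℝ} (hδ : 0 < δ) (r : ℝ) :
    HasDerivAt (fun r => Real.sqrt (r ^ 2 + δ ^ 2)) (r / Real.sqrt (r ^ 2 + δ ^ 2)) r := by
  have hpos : (0:ℝ) < r ^ 2 + δ ^ 2 := by positivity
  have h : HasDerivAt (fun r : ℝ => r ^ 2 + δ ^ 2) (2 * r) r := by
    simpa [mul_comm] using ((hasDerivAt_pow 2 r).add_const (δ ^ 2))
  have h2 := h.sqrt (ne_of_gt hpos)
  convert h2 using 1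
  have hs : Real.sqrt (r ^ 2 + δ ^ 2) ≠ 0 := by positivity
  field_simp

private lemma G_pos {δ : ℝ} (hδ : 0 < δ) (r : ℝ) : 0 < Real.sqrt (r ^ 2 + δ ^ 2) := by
  positivity

private lemma abs_le_G {δ : ℝ} (r : ℝ) : |r| ≤ Real.sqrt (r ^ 2 + δ ^ 2) := by
  rw [← Real.sqrt_sq_eq_abs]
  exact Real.sqrt_le_sqrt (by nlinarith [sq_nonneg δ])

private lemma G_le {δ : ℝ} (hδ : 0 < δ) (r : ℝ) : Real.sqrt (r ^ 2 + δ ^ 2) ≤ |r| + δ := by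
  have h : Real.sqrt (r ^ 2 + δ ^ 2) ≤ Real.sqrt ((|r| + δ) ^ 2) :=
    Real.sqrt_le_sqrt (by nlinarith [abs_nonneg r, sq_abs r])
  simpa [Real.sqrt_sq (by positivity : (0:ℝ) ≤ |r| + δ)] using h

private lemma abs_Gp_le_one {δ : ℝ} (hδ : 0 < δ) (r : ℝ) :
    |r / Real.sqrt (r ^ 2 + δ ^ 2)| ≤ 1 := by
  rw [abs_div, abs_of_pos (G_pos hδ r), div_le_one (G_pos hδ r)]
  exact abs_le_G r

private lemma abs_Gp_mul_le {δ : ℝ} (hδ : 0 < δ) (r : ℝ) :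
    |r / Real.sqrt (r ^ 2 + δ ^ 2) * r| ≤ Real.sqrt (r ^ 2 + δ ^ 2) := by
  calc |r / Real.sqrt (r ^ 2 + δ ^ 2) * r| ≤ 1 * |r| := by
        rw [abs_mul]; exact mul_le_mul_of_nonneg_right (abs_Gp_le_one hδ r) (abs_nonneg r)
  _ ≤ Real.sqrt (r ^ 2 + δ ^ 2) := by rw [one_mul]; exact abs_le_G r


private lemma aux_V0 (ε : ℝ) (hε : 0 < ε) (η : ℝ → ℝ)
    (hη_nonneg : ∀ x, 0 ≤ η x)
    (hη_pos : ∀ x : ℝ, 0 < x → η x = 0) (hη_eps : ∀ x : ℝ, x < -ε → η x = 0)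
    (ρ : ℝ → ℝ → ℝ) (M : ℝ) (hM : ∀ t x, |ρ t x| ≤ M) (hM0 : 0 ≤ M)
    (hηc : Continuous η) (hη_supp : HasCompactSupport η)
    (hηint : Integrable η)
    (hρcont : ∀ t : ℝ, 0 ≤ t → Continuous (ρ t))
    (Cη : ℝ) (hCη1 : (1:ℝ) ≤ Cη) (hCη : ∀ y, η y ≤ Cη) :
    ∀ t : ℝ, 0 ≤ t → ∀ δ : ℝ, 0 < δ → ∀ R : ℝ, ε ≤ R →
      |nlConv η ρ t 0| ≤ Cη * Real.exp ε *
        (∫ x in (0:ℝ)..R, Real.sqrt ((ρ t x) ^ 2 + δ ^ 2) * Real.exp (-x)) := by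
  intro t ht δ hδ R hR
  have hR0 : (0:ℝ) ≤ R := le_trans hε.le hR
  have hCη0 : (0:ℝ) ≤ Cη := le_trans zero_le_one hCη1
  have hcρ := hρcont t ht
  -- continuity of the weighted integrand
  have hGc : Continuous fun z => Real.sqrt ((ρ t z) ^ 2 + δ ^ 2) * Real.exp (-z) :=
    (Real.continuous_sqrt.comp ((hcρ.pow 2).add continuous_const)).mul
      (Real.continuous_exp.comp continuous_neg)
  have hGnn : ∀ z, 0 ≤ Real.sqrt ((ρ t z) ^ 2 + δ ^ 2) * Real.exp (-z) := fun z =>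
    mul_nonneg (Real.sqrt_nonneg _) (Real.exp_pos _).le
  set f : ℝ → ℝ := fun y => |ρ t (0 - y)| * η y with hf_def
  have hfc : Continuous f := (hcρ.comp (continuous_const.sub continuous_id)).abs.mul hηc
  have hfnn : ∀ y, 0 ≤ f y := fun y => mul_nonneg (abs_nonneg _) (hη_nonneg y)
  have h1 : |nlConv η ρ t 0| ≤ ∫ y, f y := by
    have hint : Integrable (fun y => ρ t (0 - y) * η y) := by
      apply Continuous.integrable_of_hasCompactSupport
      · exact (hcρ.comp (continuous_const.sub continuous_id)).mul hηc
      · exact hη_supp.mul_left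
    rw [nlConv]
    calc |∫ y, ρ t (0 - y) * η y| ≤ ∫ y, |ρ t (0 - y)| * |η y| := by
          simpa [Real.norm_eq_abs] using norm_integral_le_integral_norm (fun y => ρ t (0 - y) * η y)
    _ = ∫ y, f y := by
          congr 1; funext y; rw [hf_def, abs_of_nonneg (hη_nonneg y)]
  have hsupp : Function.support f ⊆ Icc (-ε) 0 := by
    intro y hy
    by_contra hmem
    rw [mem_Icc, not_and_or] at hmem
    have : η y = 0 := by
      rcases hmem with h | h
      · exact hη_eps y (by linarith [not_le.mp h])
      · exact hη_pos y (by linarith [not_le.mp h])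
    exact hy (by simp [hf_def, this])
  have h2 : (∫ y, f y) = ∫ y in (-ε)..(0:ℝ), f y := by
    rw [intervalIntegral.integral_of_le (by linarith : -ε ≤ (0:ℝ)), ← integral_Icc_eq_integral_Ioc,
      ← MeasureTheory.integral_indicator measurableSet_Icc, indicator_eq_self.2 hsupp]
  have h4 : (∫ y in (-ε)..(0:ℝ), f y) ≤ ∫ y in (-ε)..(0:ℝ), Cη * |ρ t (0 - y)| := by
    apply intervalIntegral.integral_mono_on (by linarith)
      (hfc.intervalIntegrable _ _)
      ((continuous_const.mul (hcρ.comp (continuous_const.sub continuous_id)).abs).intervalIntegrable _ _)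
    intro y _
    calc f y = η y * |ρ t (0 - y)| := by rw [hf_def]; ring
    _ ≤ Cη * |ρ t (0 - y)| := mul_le_mul_of_nonneg_right (hCη y) (abs_nonneg _)
  have h5 : (∫ y in (-ε)..(0:ℝ), Cη * |ρ t (0 - y)|) = Cη * ∫ z in (0:ℝ)..ε, |ρ t z| := by
    rw [intervalIntegral.integral_const_mul]
    congr 1
    have := intervalIntegral.integral_comp_neg (a := -ε) (b := (0:ℝ)) (fun z => |ρ t z|)
    simpa using this
  have h6 : (∫ z in (0:ℝ)..ε, |ρ t z|) ≤
      ∫ z in (0:ℝ)..ε, Real.exp ε * (Real.sqrt ((ρ t z) ^ 2 + δ ^ 2) * Real.exp (-z)) := by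
    apply intervalIntegral.integral_mono_on hε.le
      (hcρ.abs.intervalIntegrable _ _) ((continuous_const.mul hGc).intervalIntegrable _ _)
    intro z hz
    have h1z : (1:ℝ) ≤ Real.exp ε * Real.exp (-z) := by
      rw [← Real.exp_add]
      exact Real.one_le_exp (by linarith [hz.2])
    calc |ρ t z| ≤ Real.sqrt ((ρ t z) ^ 2 + δ ^ 2) := abs_le_G _
    _ = Real.sqrt ((ρ t z) ^ 2 + δ ^ 2) * 1 := by ring
    _ ≤ Real.sqrt ((ρ t z) ^ 2 + δ ^ 2) * (Real.exp ε * Real.exp (-z)) :=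
        mul_le_mul_of_nonneg_left h1z (Real.sqrt_nonneg _)
    _ = Real.exp ε * (Real.sqrt ((ρ t z) ^ 2 + δ ^ 2) * Real.exp (-z)) := by ring
  have h7 : (∫ z in (0:ℝ)..ε, Real.exp ε * (Real.sqrt ((ρ t z) ^ 2 + δ ^ 2) * Real.exp (-z)))
      ≤ Real.exp ε * ∫ x in (0:ℝ)..R, Real.sqrt ((ρ t x) ^ 2 + δ ^ 2) * Real.exp (-x) := by
    rw [intervalIntegral.integral_const_mul]
    apply mul_le_mul_of_nonneg_left _ (Real.exp_pos _).le
    have hsplit : (∫ x in (0:ℝ)..ε, Real.sqrt ((ρ t x) ^ 2 + δ ^ 2) * Real.exp (-x)) +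
        (∫ x in ε..R, Real.sqrt ((ρ t x) ^ 2 + δ ^ 2) * Real.exp (-x)) =
        ∫ x in (0:ℝ)..R, Real.sqrt ((ρ t x) ^ 2 + δ ^ 2) * Real.exp (-x) :=
      intervalIntegral.integral_add_adjacent_intervals
        (hGc.intervalIntegrable _ _) (hGc.intervalIntegrable _ _)
    have hnn : 0 ≤ ∫ x in ε..R, Real.sqrt ((ρ t x) ^ 2 + δ ^ 2) * Real.exp (-x) :=
      intervalIntegral.integral_nonneg hR (fun u _ => hGnn u)
    linarith
  calc |nlConv η ρ t 0| ≤ ∫ y, f y := h1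
  _ = ∫ y in (-ε)..(0:ℝ), f y := h2
  _ ≤ ∫ y in (-ε)..(0:ℝ), Cη * |ρ t (0 - y)| := h4
  _ = Cη * ∫ z in (0:ℝ)..ε, |ρ t z| := h5
  _ ≤ Cη * ∫ z in (0:ℝ)..ε, Real.exp ε * (Real.sqrt ((ρ t z) ^ 2 + δ ^ 2) * Real.exp (-z)) :=
      mul_le_mul_of_nonneg_left h6 hCη0
  _ ≤ Cη * (Real.exp ε * ∫ x in (0:ℝ)..R, Real.sqrt ((ρ t x) ^ 2 + δ ^ 2) * Real.exp (-x)) :=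
      mul_le_mul_of_nonneg_left h7 hCη0
  _ = Cη * Real.exp ε * ∫ x in (0:ℝ)..R, Real.sqrt ((ρ t x) ^ 2 + δ ^ 2) * Real.exp (-x) := by ring

private lemma aux_energy_hasDeriv (ρ : ℝ → ℝ → ℝ) (M : ℝ) (hM : ∀ t x, |ρ t x| ≤ M) (hM0 : 0 ≤ M)
    (hρcont : ∀ t : ℝ, 0 ≤ t → Continuous (ρ t))
    (ρt : ℝ → ℝ → ℝ)
    (hρt : ∀ t x : ℝ, 0 < t → HasDerivAt (fun s => ρ s x) (ρt t x) t)
    (hρtcont : ∀ t : ℝ, 0 < t → Continuous (fun x => ρt t x))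
    (hρtbdd : ∀ a b c : ℝ, 0 < a → ∃ B : ℝ, ∀ s x : ℝ,
      s ∈ Icc a b → x ∈ Icc 0 c → |ρt s x| ≤ B)
    (δ R : ℝ) (hδ : 0 < δ) (hR0 : 0 ≤ R) :
    ∀ t : ℝ, 0 < t → HasDerivAt
      (fun s => ∫ x in (0:ℝ)..R, Real.sqrt ((ρ s x) ^ 2 + δ ^ 2) * Real.exp (-x))
      (∫ x in (0:ℝ)..R, ρ t x / Real.sqrt ((ρ t x) ^ 2 + δ ^ 2) * ρt t x * Real.exp (-x)) t := by
  intro t ht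
  obtain ⟨B, hB⟩ := hρtbdd (t/2) (t+t) R (by linarith)
  have hballmem : ∀ s ∈ Metric.ball t (t/2), s ∈ Icc (t/2) (t+t) ∧ 0 < s := by
    intro s hs
    rw [Metric.mem_ball, Real.dist_eq, abs_sub_lt_iff] at hs
    constructor
    · constructor <;> [linarith [hs.2]; linarith [hs.1]]
    · linarith [hs.2]
  have hGc : ∀ s : ℝ, 0 ≤ s → Continuous
      (fun x => Real.sqrt ((ρ s x) ^ 2 + δ ^ 2) * Real.exp (-x)) := by
    intro s hs
    exact (Real.continuous_sqrt.comp (((hρcont s hs).pow 2).add continuous_const)).mul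
      (Real.continuous_exp.comp continuous_neg)
  have key := intervalIntegral.hasDerivAt_integral_of_dominated_loc_of_deriv_le
    (F := fun s x => Real.sqrt ((ρ s x) ^ 2 + δ ^ 2) * Real.exp (-x))
    (F' := fun s x => ρ s x / Real.sqrt ((ρ s x) ^ 2 + δ ^ 2) * ρt s x * Real.exp (-x))
    (μ := volume) (x₀ := t) (a := 0) (b := R) (bound := fun _ => |B|)
    (Metric.ball_mem_nhds t (show (0:ℝ) < t/2 by linarith))
    (by
      filter_upwards [Ioi_mem_nhds ht] with s hs
      exact ((hGc s (le_of_lt hs)).aestronglyMeasurable).restrict)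
    ((hGc t ht.le).intervalIntegrable _ _)
    (by
      have hcρ := hρcont t ht.le
      have hcont : Continuous (fun x => ρ t x / Real.sqrt ((ρ t x) ^ 2 + δ ^ 2) * ρt t x *
          Real.exp (-x)) := by
        apply Continuous.mul
        · apply Continuous.mul
          · exact hcρ.div
              (Real.continuous_sqrt.comp ((hcρ.pow 2).add continuous_const))
              (fun x => (G_pos hδ (ρ t x)).ne')
          · exact hρtcont t ht
        · exact Real.continuous_exp.comp continuous_neg
      exact hcont.aestronglyMeasurable.restrict)
    (by
      filter_upwards with x hx s hs
      obtain ⟨hsIcc, hs0⟩ := hballmem s hs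
      rw [uIoc_of_le hR0] at hx
      have hxIcc : x ∈ Icc (0:ℝ) R := ⟨hx.1.le, hx.2⟩
      have hw1 : Real.exp (-x) ≤ 1 := Real.exp_le_one_iff.mpr (by linarith [hx.1])
      have h1 : |ρ s x / Real.sqrt ((ρ s x) ^ 2 + δ ^ 2) * ρt s x * Real.exp (-x)|
          = |ρ s x / Real.sqrt ((ρ s x) ^ 2 + δ ^ 2)| * |ρt s x| * Real.exp (-x) := by
        rw [abs_mul, abs_mul, abs_of_pos (Real.exp_pos _)]
      rw [Real.norm_eq_abs, h1]
      calc |ρ s x / Real.sqrt ((ρ s x) ^ 2 + δ ^ 2)| * |ρt s x| * Real.exp (-x)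
          ≤ 1 * |B| * 1 := by
            apply mul_le_mul (mul_le_mul (abs_Gp_le_one hδ _)
              ((hB s x hsIcc hxIcc).trans (le_abs_self B)) (abs_nonneg _) zero_le_one)
              hw1 (Real.exp_pos _).le (by positivity)
      _ = |B| := by ring)
    (intervalIntegrable_const)
    (by
      filter_upwards with x hx s hs
      have hs0 := (hballmem s hs).2
      have hGd := (hasDerivAt_G hδ (ρ s x)).comp s (hρt s x hs0)
      exact hGd.mul_const (Real.exp (-x)))
  exact key.2

private lemma aux_energy_deriv_bound (ρ : ℝ → ℝ → ℝ) (M M2 CV : ℝ) (hM : ∀ t x, |ρ t x| ≤ M) (hM0 : 0 ≤ M)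
    (hM20 : 0 ≤ M2) (hCV0 : 0 ≤ CV)
    (hρcont : ∀ t : ℝ, 0 ≤ t → Continuous (ρ t))
    (ρt ρx : ℝ → ℝ → ℝ)
    (hρx : ∀ t x : ℝ, 0 < t → HasDerivAt (fun y => ρ t y) (ρx t x) x)
    (hρxcont : ∀ t : ℝ, 0 < t → Continuous (fun x => ρx t x))
    (V Vx : ℝ → ℝ → ℝ)
    (hVd : ∀ t x : ℝ, 0 ≤ t → HasDerivAt (V t) (Vx t x) x)
    (hVb : ∀ t x : ℝ, 0 ≤ t → |V t x| ≤ M)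
    (hVxb : ∀ t x : ℝ, 0 ≤ t → |Vx t x| ≤ M2)
    (hVxcont : ∀ t : ℝ, 0 ≤ t → Continuous (Vx t))
    (hPDE : ∀ t x : ℝ, 0 < t → ρt t x = -(ρx t x * V t x + ρ t x * Vx t x))
    (δ R : ℝ) (hδ : 0 < δ) (hδ1 : δ ≤ 1) (hR0 : 0 ≤ R)
    (t : ℝ) (ht : 0 < t)
    (hV0E : |V t 0| ≤ CV * ∫ x in (0:ℝ)..R, Real.sqrt ((ρ t x) ^ 2 + δ ^ 2) * Real.exp (-x)) :
    |∫ x in (0:ℝ)..R, ρ t x / Real.sqrt ((ρ t x) ^ 2 + δ ^ 2) * ρt t x * Real.exp (-x)|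
      ≤ (CV * (M + 1) + (M + 2 * M2)) *
          (∫ x in (0:ℝ)..R, Real.sqrt ((ρ t x) ^ 2 + δ ^ 2) * Real.exp (-x))
        + (M + 1) * M * Real.exp (-R) := by
  have ht0 : (0:ℝ) ≤ t := ht.le
  have hcρ := hρcont t ht0
  set A : ℝ → ℝ := fun x => Real.sqrt ((ρ t x) ^ 2 + δ ^ 2) with hA_def
  set w : ℝ → ℝ := fun x => Real.exp (-x) with hw_def
  have hAc : Continuous A := Real.continuous_sqrt.comp ((hcρ.pow 2).add continuous_const)
  have hwc : Continuous w := Real.continuous_exp.comp continuous_neg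
  have hwpos : ∀ x, 0 < w x := fun x => Real.exp_pos _
  have hAnn : ∀ x, 0 ≤ A x := fun x => Real.sqrt_nonneg _
  have hAle : ∀ x, A x ≤ M + 1 := by
    intro x
    calc A x ≤ |ρ t x| + δ := G_le hδ _
    _ ≤ M + 1 := add_le_add (hM t x) hδ1
  have hVc : Continuous (V t) := by
    rw [continuous_iff_continuousAt]; exact fun x => (hVd t x ht0).continuousAt
  have hA'c : Continuous (fun x => ρ t x / A x * ρx t x) :=
    (hcρ.div hAc (fun x => (G_pos hδ (ρ t x)).ne')).mul (hρxcont t ht)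
  set Φ : ℝ → ℝ := fun x => A x * V t x * w x with hΦ_def
  set Φ' : ℝ → ℝ := fun x =>
    (ρ t x / A x * ρx t x * V t x + A x * Vx t x) * w x + A x * V t x * -w x with hΦ'_def
  have hw' : ∀ x : ℝ, HasDerivAt w (-w x) x := by
    intro x
    have h := (Real.hasDerivAt_exp (-x)).comp x ((hasDerivAt_id x).neg)
    simpa [hw_def, Function.comp_def] using h
  have hΦd : ∀ x, HasDerivAt Φ (Φ' x) x := by
    intro x
    have h1 : HasDerivAt A (ρ t x / A x * ρx t x) x :=
      (hasDerivAt_G hδ (ρ t x)).comp x (hρx t x ht)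
    exact (h1.mul (hVd t x ht0)).mul (hw' x)
  have hΦ'c : Continuous Φ' := by
    apply Continuous.add
    · exact ((hA'c.mul hVc).add (hAc.mul (hVxcont t ht0))).mul hwc
    · exact ((hAc.mul hVc)).mul hwc.neg
  set ψ : ℝ → ℝ := fun x => (A x * Vx t x - A x * V t x - ρ t x / A x * ρ t x * Vx t x) * w x
    with hψ_def
  have hψc : Continuous ψ :=
    (((hAc.mul (hVxcont t ht0)).sub (hAc.mul hVc)).sub
      (((hcρ.div hAc (fun x => (G_pos hδ (ρ t x)).ne')).mul hcρ).mul (hVxcont t ht0))).mul hwc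
  have hkey : ∀ x, ρ t x / A x * ρt t x * w x = -Φ' x + ψ x := by
    intro x
    rw [hPDE t x ht, hΦ'_def, hψ_def]
    ring
  have hsplit : (∫ x in (0:ℝ)..R, ρ t x / A x * ρt t x * w x)
      = -(Φ R - Φ 0) + ∫ x in (0:ℝ)..R, ψ x := by
    rw [intervalIntegral.integral_congr (fun x _ => hkey x)]
    rw [intervalIntegral.integral_add (f := fun x => -Φ' x) (hΦ'c.neg.intervalIntegrable _ _)
      (hψc.intervalIntegrable _ _), intervalIntegral.integral_neg,
      intervalIntegral.integral_eq_sub_of_hasDerivAt (fun x _ => hΦd x)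
        (hΦ'c.intervalIntegrable _ _)]
  have hEnn : 0 ≤ ∫ x in (0:ℝ)..R, A x * w x :=
    intervalIntegral.integral_nonneg hR0 (fun u _ => mul_nonneg (hAnn u) (hwpos u).le)
  have hΦ0 : |Φ 0| ≤ CV * (M + 1) * ∫ x in (0:ℝ)..R, A x * w x := by
    have : |Φ 0| = A 0 * |V t 0| * 1 := by
      rw [hΦ_def]
      simp [abs_mul, abs_of_nonneg (hAnn 0), hw_def]
    rw [this, mul_one]
    calc A 0 * |V t 0| ≤ (M + 1) * (CV * ∫ x in (0:ℝ)..R, A x * w x) :=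
          mul_le_mul (hAle 0) hV0E (abs_nonneg _) (by linarith)
    _ = CV * (M + 1) * ∫ x in (0:ℝ)..R, A x * w x := by ring
  have hΦR : |Φ R| ≤ (M + 1) * M * Real.exp (-R) := by
    have : |Φ R| = A R * |V t R| * w R := by
      rw [hΦ_def]
      simp [abs_mul, abs_of_nonneg (hAnn R), abs_of_pos (hwpos R)]
    rw [this]
    have : A R * |V t R| ≤ (M + 1) * M :=
      mul_le_mul (hAle R) (hVb t R ht0) (abs_nonneg _) (by linarith)
    exact mul_le_mul_of_nonneg_right this (hwpos R).le
  have hψb : |∫ x in (0:ℝ)..R, ψ x| ≤ (M + 2 * M2) * ∫ x in (0:ℝ)..R, A x * w x := by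
    calc |∫ x in (0:ℝ)..R, ψ x| ≤ ∫ x in (0:ℝ)..R, |ψ x| :=
          intervalIntegral.abs_integral_le_integral_abs hR0
    _ ≤ ∫ x in (0:ℝ)..R, (M + 2 * M2) * (A x * w x) := by
        apply intervalIntegral.integral_mono_on hR0 (hψc.abs.intervalIntegrable _ _)
          ((continuous_const.mul (hAc.mul hwc)).intervalIntegrable _ _)
        intro x _
        rw [hψ_def]
        have h1 : |(A x * Vx t x - A x * V t x - ρ t x / A x * ρ t x * Vx t x) * w x|
            = |A x * Vx t x - A x * V t x - ρ t x / A x * ρ t x * Vx t x| * w x := by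
          rw [abs_mul, abs_of_pos (hwpos x)]
        rw [h1]
        have h2 : |A x * Vx t x - A x * V t x - ρ t x / A x * ρ t x * Vx t x|
            ≤ (M + 2 * M2) * A x := by
          have e1 : |A x * Vx t x| ≤ A x * M2 := by
            rw [abs_mul, abs_of_nonneg (hAnn x)]
            exact mul_le_mul_of_nonneg_left (hVxb t x ht0) (hAnn x)
          have e2 : |A x * V t x| ≤ A x * M := by
            rw [abs_mul, abs_of_nonneg (hAnn x)]
            exact mul_le_mul_of_nonneg_left (hVb t x ht0) (hAnn x)
          have e3 : |ρ t x / A x * ρ t x * Vx t x| ≤ A x * M2 := by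
            rw [abs_mul]
            exact mul_le_mul (abs_Gp_mul_le hδ _) (hVxb t x ht0) (abs_nonneg _) (hAnn x)
          calc |A x * Vx t x - A x * V t x - ρ t x / A x * ρ t x * Vx t x|
              ≤ |A x * Vx t x| + |A x * V t x| + |ρ t x / A x * ρ t x * Vx t x| := by
                have h3 := abs_sub (A x * Vx t x - A x * V t x)
                  (ρ t x / A x * ρ t x * Vx t x)
                have h4 := abs_sub (A x * Vx t x) (A x * V t x)
                linarith
          _ ≤ A x * M2 + A x * M + A x * M2 := by linarith
          _ = (M + 2 * M2) * A x := by ring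
        calc |A x * Vx t x - A x * V t x - ρ t x / A x * ρ t x * Vx t x| * w x
            ≤ (M + 2 * M2) * A x * w x :=
              mul_le_mul_of_nonneg_right h2 (hwpos x).le
        _ = (M + 2 * M2) * (A x * w x) := by ring
    _ = (M + 2 * M2) * ∫ x in (0:ℝ)..R, A x * w x := intervalIntegral.integral_const_mul _ _
  calc |∫ x in (0:ℝ)..R, ρ t x / A x * ρt t x * w x|
      = |-(Φ R - Φ 0) + ∫ x in (0:ℝ)..R, ψ x| := by rw [hsplit]
  _ ≤ |Φ 0| + |Φ R| + |∫ x in (0:ℝ)..R, ψ x| := by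
      have := abs_add_le (-(Φ R - Φ 0)) (∫ x in (0:ℝ)..R, ψ x)
      have h2 : |-(Φ R - Φ 0)| ≤ |Φ 0| + |Φ R| := by
        rw [abs_neg]
        calc |Φ R - Φ 0| ≤ |Φ R| + |Φ 0| := abs_sub _ _
        _ = |Φ 0| + |Φ R| := by ring
      linarith
  _ ≤ CV * (M + 1) * (∫ x in (0:ℝ)..R, A x * w x) + (M + 1) * M * Real.exp (-R)
      + (M + 2 * M2) * ∫ x in (0:ℝ)..R, A x * w x := by linarith
  _ = (CV * (M + 1) + (M + 2 * M2)) * (∫ x in (0:ℝ)..R, A x * w x)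
      + (M + 1) * M * Real.exp (-R) := by ring

private lemma aux_energy_zero_and_cont (ρ : ℝ → ℝ → ℝ) (M : ℝ) (hM : ∀ t x, |ρ t x| ≤ M) (hM0 : 0 ≤ M)
    (hρc : ContinuousOn (Function.uncurry ρ) (Ici (0:ℝ) ×ˢ (univ : Set ℝ)))
    (hρcont : ∀ t : ℝ, 0 ≤ t → Continuous (ρ t))
    (hρ_init : ∀ x : ℝ, 0 ≤ x → ρ 0 x = 0)
    (δ R : ℝ) (hδ : 0 < δ) (hδ1 : δ ≤ 1) (hR0 : 0 ≤ R) :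
    ((∫ x in (0:ℝ)..R, Real.sqrt ((ρ 0 x) ^ 2 + δ ^ 2) * Real.exp (-x)) ≤ δ) ∧
      ContinuousWithinAt
        (fun s => ∫ x in (0:ℝ)..R, Real.sqrt ((ρ s x) ^ 2 + δ ^ 2) * Real.exp (-x))
        (Ioi 0) 0 := by
  have hGc : ∀ s : ℝ, 0 ≤ s → Continuous
      (fun x => Real.sqrt ((ρ s x) ^ 2 + δ ^ 2) * Real.exp (-x)) := by
    intro s hs
    exact (Real.continuous_sqrt.comp (((hρcont s hs).pow 2).add continuous_const)).mul
      (Real.continuous_exp.comp continuous_neg)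
  constructor
  · have hcongr : EqOn (fun x => Real.sqrt ((ρ 0 x) ^ 2 + δ ^ 2) * Real.exp (-x))
        (fun x => δ * Real.exp (-x)) (uIcc 0 R) := by
      intro x hx
      rw [uIcc_of_le hR0] at hx
      simp only [hρ_init x hx.1]
      rw [show (0:ℝ) ^ 2 + δ ^ 2 = δ ^ 2 by ring, Real.sqrt_sq hδ.le]
    rw [intervalIntegral.integral_congr hcongr, intervalIntegral.integral_const_mul]
    have hexpint : (∫ x in (0:ℝ)..R, Real.exp (-x)) = 1 - Real.exp (-R) := by
      have hw' : ∀ u : ℝ, HasDerivAt (fun v => -Real.exp (-v)) (Real.exp (-u)) u := by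
        intro u
        have h := (Real.hasDerivAt_exp (-u)).comp u ((hasDerivAt_id u).neg)
        exact ((by simpa using (hasDerivAt_id u).neg.exp :
          HasDerivAt (fun v => Real.exp (-v)) (-Real.exp (-u)) u).neg).congr_deriv (neg_neg _)
      rw [intervalIntegral.integral_eq_sub_of_hasDerivAt (fun u _ => hw' u)
        ((Real.continuous_exp.comp continuous_neg).intervalIntegrable _ _)]
      simp
      ring
    rw [hexpint]
    nlinarith [Real.exp_pos (-R)]
  · apply intervalIntegral.tendsto_integral_filter_of_dominated_convergence
      (bound := fun _ => M + 1)
    · filter_upwards [self_mem_nhdsWithin] with σ hσ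
      exact ((hGc σ (le_of_lt hσ)).aestronglyMeasurable).restrict
    · filter_upwards [self_mem_nhdsWithin] with σ hσ
      filter_upwards with x hx
      rw [uIoc_of_le hR0] at hx
      have h1 : Real.sqrt ((ρ σ x) ^ 2 + δ ^ 2) ≤ M + 1 := by
        have h2 : Real.sqrt ((ρ σ x) ^ 2 + δ ^ 2) ≤ Real.sqrt ((M + 1) ^ 2) := by
          apply Real.sqrt_le_sqrt
          have := hM σ x
          nlinarith [abs_nonneg (ρ σ x), sq_abs (ρ σ x)]
        simpa [Real.sqrt_sq (by linarith : (0:ℝ) ≤ M + 1)] using h2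
      have hw1 : Real.exp (-x) ≤ 1 := Real.exp_le_one_iff.mpr (by linarith [hx.1])
      rw [Real.norm_eq_abs, abs_of_nonneg (mul_nonneg (Real.sqrt_nonneg _) (Real.exp_pos _).le)]
      calc Real.sqrt ((ρ σ x) ^ 2 + δ ^ 2) * Real.exp (-x) ≤ (M + 1) * 1 :=
            mul_le_mul h1 hw1 (Real.exp_pos _).le (by linarith)
      _ = M + 1 := by ring
    · exact intervalIntegrable_const
    · filter_upwards with x hx
      have h1 : ContinuousWithinAt (Function.uncurry ρ) (Ici (0:ℝ) ×ˢ (univ : Set ℝ)) (0, x) :=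
        hρc (0, x) ⟨Set.self_mem_Ici, trivial⟩
      have h2 : Tendsto (fun s : ℝ => ((s, x) : ℝ × ℝ)) (𝓝[>] (0:ℝ))
          (𝓝[Ici (0:ℝ) ×ˢ (univ : Set ℝ)] ((0:ℝ), x)) := by
        apply tendsto_nhdsWithin_of_tendsto_nhds_of_eventually_within
        · exact ((continuous_id.prodMk continuous_const).tendsto 0).mono_left
            nhdsWithin_le_nhds
        · filter_upwards [self_mem_nhdsWithin] with s hs
          exact ⟨show (0:ℝ) ≤ s from le_of_lt hs, trivial⟩
      have h4 : Tendsto (fun s => ρ s x) (𝓝[>] (0:ℝ)) (𝓝 (ρ 0 x)) := h1.tendsto.comp h2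
      have h5 : Continuous (fun r : ℝ => Real.sqrt (r ^ 2 + δ ^ 2) * Real.exp (-x)) :=
        (Real.continuous_sqrt.comp ((continuous_pow 2).add continuous_const)).mul
          continuous_const
      exact (h5.tendsto (ρ 0 x)).comp h4

private lemma aux_gronwall (EE E' : ℝ → ℝ) (K e0 δ : ℝ) (hδ : 0 < δ) (hK : 0 < K) (he0 : 0 ≤ e0)
    (hEd : ∀ t : ℝ, 0 < t → HasDerivAt EE (E' t) t)
    (hE'b : ∀ t : ℝ, 0 < t → |E' t| ≤ K * EE t + e0)
    (hEnn : ∀ t : ℝ, 0 ≤ t → 0 ≤ EE t)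
    (hE0 : EE 0 ≤ δ)
    (hEc : ContinuousWithinAt EE (Ioi 0) 0)
    (T : ℝ) (hT : 0 < T) : EE T ≤ gronwallBound δ K e0 T := by
  have grw : ∀ σ ∈ Ioc (0:ℝ) T, EE T ≤ gronwallBound (EE σ) K e0 (T - σ) := by
    intro σ hσ
    have hcont : ContinuousOn EE (Icc σ T) := fun u hu =>
      ((hEd u (lt_of_lt_of_le hσ.1 hu.1)).continuousAt).continuousWithinAt
    have hderiv : ∀ u ∈ Ico σ T, HasDerivWithinAt EE (E' u) (Ici u) u := fun u hu =>
      (hEd u (lt_of_lt_of_le hσ.1 hu.1)).hasDerivWithinAt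
    have hbnd : ∀ u ∈ Ico σ T, ‖E' u‖ ≤ K * ‖EE u‖ + e0 := by
      intro u hu
      have hu0 : 0 < u := lt_of_lt_of_le hσ.1 hu.1
      rw [Real.norm_eq_abs, Real.norm_eq_abs, abs_of_nonneg (hEnn u hu0.le)]
      exact hE'b u hu0
    have := norm_le_gronwallBound_of_norm_deriv_right_le hcont hderiv
      (le_refl ‖EE σ‖) hbnd T ⟨hσ.2, le_rfl⟩
    calc EE T ≤ |EE T| := le_abs_self _
    _ ≤ gronwallBound ‖EE σ‖ K e0 (T - σ) := this
    _ = gronwallBound (EE σ) K e0 (T - σ) := by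
        rw [Real.norm_eq_abs, abs_of_nonneg (hEnn σ hσ.1.le)]
  set Ψ : ℝ → ℝ := fun σ =>
    EE σ * Real.exp (K * (T - σ)) + e0 / K * (Real.exp (K * (T - σ)) - 1) with hΨ_def
  have hΨeq : ∀ σ : ℝ, gronwallBound (EE σ) K e0 (T - σ) = Ψ σ := by
    intro σ
    rw [gronwallBound_of_K_ne_0 hK.ne']
  have hev : ∀ᶠ σ in 𝓝[>] (0:ℝ), EE T ≤ Ψ σ := by
    filter_upwards [Ioc_mem_nhdsGT hT] with σ hσ
    rw [← hΨeq σ]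
    exact grw σ hσ
  have htend : Tendsto Ψ (𝓝[>] (0:ℝ)) (𝓝 (Ψ 0)) := by
    apply Tendsto.add
    · exact hEc.tendsto.mul
        ((Real.continuous_exp.comp (continuous_const.mul
          (continuous_const.sub continuous_id))).continuousWithinAt.tendsto)
    · exact ((continuous_const.mul ((Real.continuous_exp.comp (continuous_const.mul
        (continuous_const.sub continuous_id))).sub
        continuous_const)).continuousWithinAt.tendsto)
  have hlim : EE T ≤ Ψ 0 := ge_of_tendsto htend hev
  have hfin : Ψ 0 ≤ gronwallBound δ K e0 T := by
    rw [gronwallBound_of_K_ne_0 hK.ne', hΨ_def]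
    simp only [sub_zero]
    have hexp : 0 < Real.exp (K * T) := Real.exp_pos _
    nlinarith
  linarith

private lemma aux_conclusion (ε : ℝ) (hε : 0 < ε) (ρ : ℝ → ℝ → ℝ) (M K : ℝ) (hM0 : 0 ≤ M) (hKpos : 0 < K)
    (hρcont : ∀ t : ℝ, 0 ≤ t → Continuous (ρ t))
    (main : ∀ δ : ℝ, 0 < δ → δ ≤ 1 → ∀ R : ℝ, ε ≤ R → ∀ T : ℝ, 0 < T →
      (∫ x in (0:ℝ)..R, Real.sqrt ((ρ T x) ^ 2 + δ ^ 2) * Real.exp (-x)) ≤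
        gronwallBound δ K ((M + 1) * M * Real.exp (-R)) T)
    (t : ℝ) (ht' : 0 < t) (x : ℝ) (hx : 0 ≤ x) (hne : ρ t x ≠ 0) : False := by
  have hc : 0 < |ρ t x| := abs_pos.2 hne
  have hca : Tendsto (fun z => |ρ t z|) (𝓝 x) (𝓝 |ρ t x|) :=
    ((hρcont t ht'.le).abs).continuousAt
  have hev : ∀ᶠ z in 𝓝 x, |ρ t x| / 2 < |ρ t z| :=
    hca.eventually (eventually_gt_nhds (by linarith))
  obtain ⟨r, hr, hball⟩ := Metric.eventually_nhds_iff.mp hev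
  set h : ℝ := r / 2 with hh_def
  have hh0 : 0 < h := by positivity
  have hIcc : ∀ z ∈ Icc x (x + h), |ρ t x| / 2 ≤ |ρ t z| := by
    intro z hz
    apply le_of_lt
    apply hball
    rw [Real.dist_eq, abs_sub_lt_iff]
    constructor <;> [linarith [hz.2]; linarith [hz.1]]
  set τ : ℝ := |ρ t x| / 2 * Real.exp (-(x + h)) * h with hτ_def
  have hτ : 0 < τ := by positivity
  have hlow : ∀ δ : ℝ, 0 < δ → ∀ R : ℝ, max ε (x + h) ≤ R →
      τ ≤ ∫ u in (0:ℝ)..R, Real.sqrt ((ρ t u) ^ 2 + δ ^ 2) * Real.exp (-u) := by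
    intro δ hδ R hRge
    have hεR : ε ≤ R := le_trans (le_max_left _ _) hRge
    have hxh : x + h ≤ R := le_trans (le_max_right _ _) hRge
    have hR0 : (0:ℝ) ≤ R := le_trans hε.le hεR
    have hGc : Continuous (fun u => Real.sqrt ((ρ t u) ^ 2 + δ ^ 2) * Real.exp (-u)) :=
      (Real.continuous_sqrt.comp (((hρcont t ht'.le).pow 2).add continuous_const)).mul
        (Real.continuous_exp.comp continuous_neg)
    have hGnn : ∀ u : ℝ, 0 ≤ Real.sqrt ((ρ t u) ^ 2 + δ ^ 2) * Real.exp (-u) := fun u =>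
      mul_nonneg (Real.sqrt_nonneg _) (Real.exp_pos _).le
    have h1 : τ = ∫ z in x..(x + h), |ρ t x| / 2 * Real.exp (-(x + h)) := by
      rw [intervalIntegral.integral_const]
      simp only [smul_eq_mul, add_sub_cancel_left]
      ring
    have h2 : τ ≤ ∫ z in x..(x + h), Real.sqrt ((ρ t z) ^ 2 + δ ^ 2) * Real.exp (-z) := by
      rw [h1]
      apply intervalIntegral.integral_mono_on (by linarith)
        (intervalIntegrable_const (μ := volume)) (hGc.intervalIntegrable _ _)
      intro z hz
      have e1 : |ρ t x| / 2 ≤ Real.sqrt ((ρ t z) ^ 2 + δ ^ 2) :=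
        le_trans (hIcc z hz) (le_trans (le_refl _) (abs_le_G _))
      have e2 : Real.exp (-(x + h)) ≤ Real.exp (-z) :=
        Real.exp_le_exp.mpr (by linarith [hz.2])
      exact mul_le_mul e1 e2 (Real.exp_pos _).le (Real.sqrt_nonneg _)
    have h3 : (∫ z in x..(x + h), Real.sqrt ((ρ t z) ^ 2 + δ ^ 2) * Real.exp (-z))
        ≤ ∫ u in (0:ℝ)..R, Real.sqrt ((ρ t u) ^ 2 + δ ^ 2) * Real.exp (-u) := by
      have i1 := hGc.intervalIntegrable (μ := volume) (0:ℝ) x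
      have i2 := hGc.intervalIntegrable (μ := volume) x (x + h)
      have i3 := hGc.intervalIntegrable (μ := volume) (x + h) R
      have s1 : (∫ u in (0:ℝ)..x, Real.sqrt ((ρ t u) ^ 2 + δ ^ 2) * Real.exp (-u)) +
          (∫ u in x..(x + h), Real.sqrt ((ρ t u) ^ 2 + δ ^ 2) * Real.exp (-u)) =
          ∫ u in (0:ℝ)..(x + h), Real.sqrt ((ρ t u) ^ 2 + δ ^ 2) * Real.exp (-u) :=
        intervalIntegral.integral_add_adjacent_intervals i1 i2
      have s2 : (∫ u in (0:ℝ)..(x + h), Real.sqrt ((ρ t u) ^ 2 + δ ^ 2) * Real.exp (-u)) +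
          (∫ u in (x + h)..R, Real.sqrt ((ρ t u) ^ 2 + δ ^ 2) * Real.exp (-u)) =
          ∫ u in (0:ℝ)..R, Real.sqrt ((ρ t u) ^ 2 + δ ^ 2) * Real.exp (-u) :=
        intervalIntegral.integral_add_adjacent_intervals (by
          simpa using (i1.trans i2)) i3
      have n1 : 0 ≤ ∫ u in (0:ℝ)..x, Real.sqrt ((ρ t u) ^ 2 + δ ^ 2) * Real.exp (-u) :=
        intervalIntegral.integral_nonneg hx (fun u _ => hGnn u)
      have n3 : 0 ≤ ∫ u in (x + h)..R, Real.sqrt ((ρ t u) ^ 2 + δ ^ 2) * Real.exp (-u) :=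
        intervalIntegral.integral_nonneg hxh (fun u _ => hGnn u)
      linarith
    linarith
  -- choose δ and R
  set c₂ : ℝ := (M + 1) * M * (Real.exp (K * t) - 1) / K with hc₂_def
  have hc₂0 : 0 ≤ c₂ := by
    apply div_nonneg _ hKpos.le
    have h1 : (1:ℝ) ≤ Real.exp (K * t) := Real.one_le_exp (by positivity)
    exact mul_nonneg (mul_nonneg (by linarith) hM0) (by linarith)
  set δ₀ : ℝ := min 1 (τ / (2 * Real.exp (K * t))) with hδ₀_def
  have hδ₀pos : 0 < δ₀ := lt_min one_pos (by positivity)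
  have hδ₀1 : δ₀ ≤ 1 := min_le_left _ _
  set R₀ : ℝ := max (max ε (x + h)) (Real.log (4 * (c₂ + 1) / τ)) with hR₀_def
  have hR₀ge : max ε (x + h) ≤ R₀ := le_max_left _ _
  have hεR₀ : ε ≤ R₀ := le_trans (le_max_left _ _) hR₀ge
  have hexpR₀ : Real.exp (-R₀) ≤ τ / (4 * (c₂ + 1)) := by
    have hA : (0:ℝ) < 4 * (c₂ + 1) / τ := by positivity
    have h1 : Real.log (4 * (c₂ + 1) / τ) ≤ R₀ := le_max_right _ _
    calc Real.exp (-R₀) ≤ Real.exp (-(Real.log (4 * (c₂ + 1) / τ))) :=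
          Real.exp_le_exp.mpr (by linarith)
    _ = 1 / (4 * (c₂ + 1) / τ) := by rw [Real.exp_neg, Real.exp_log hA, one_div]
    _ = τ / (4 * (c₂ + 1)) := by field_simp
  have hup := main δ₀ hδ₀pos hδ₀1 R₀ hεR₀ t ht'
  have hlo := hlow δ₀ hδ₀pos R₀ hR₀ge
  rw [gronwallBound_of_K_ne_0 hKpos.ne'] at hup
  have hgb : δ₀ * Real.exp (K * t) + (M + 1) * M * Real.exp (-R₀) / K * (Real.exp (K * t) - 1)
      < τ := by
    have e1 : δ₀ * Real.exp (K * t) ≤ τ / 2 := by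
      have : δ₀ ≤ τ / (2 * Real.exp (K * t)) := min_le_right _ _
      have hE : (0:ℝ) < Real.exp (K * t) := Real.exp_pos _
      calc δ₀ * Real.exp (K * t) ≤ τ / (2 * Real.exp (K * t)) * Real.exp (K * t) :=
            mul_le_mul_of_nonneg_right this hE.le
      _ = τ / 2 := by field_simp
    have e2 : (M + 1) * M * Real.exp (-R₀) / K * (Real.exp (K * t) - 1)
        = Real.exp (-R₀) * c₂ := by rw [hc₂_def]; ring
    have e3 : Real.exp (-R₀) * c₂ ≤ τ / 4 := by
      calc Real.exp (-R₀) * c₂ ≤ τ / (4 * (c₂ + 1)) * c₂ :=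
            mul_le_mul_of_nonneg_right hexpR₀ hc₂0
      _ ≤ τ / 4 := by
          rw [div_mul_eq_mul_div, div_le_div_iff₀ (by positivity) (by norm_num)]
          nlinarith
    rw [e2]
    linarith
  linarith

set_option maxHeartbeats 1600000 in
/-- For a smooth nonnegative convolution kernel of unit mass supported on `[−ε,0]`,
a bounded `C¹` classical solution of the nonlocal Burgers equation
`∂_t ρ + ∂_x (ρ·(ρ∗η)) = 0` that vanishes on `{x ≥ 0}` at time `0` vanishes on
`{x ≥ 0}` for every `t ≥ 0`. -/
theorem support_confined_to_negative_axis (ε : ℝ) (hε : 0 < ε) (η : ℝ → ℝ)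
    (hη_smooth : ContDiff ℝ (⊤ : ℕ∞) η) (hη_supp : HasCompactSupport η)
    (hη_nonneg : ∀ x, 0 ≤ η x) (hη_mass : (∫ x : ℝ, η x) = 1)
    (hη_pos : ∀ x : ℝ, 0 < x → η x = 0) (hη_eps : ∀ x : ℝ, x < -ε → η x = 0)
    (ρ : ℝ → ℝ → ℝ) (hρ_bdd : ∃ M, ∀ t x, |ρ t x| ≤ M)
    (hρ_reg : ContDiffOn ℝ 1 (Function.uncurry ρ) (Ici (0:ℝ) ×ˢ (univ : Set ℝ)))
    (hρ_pde : ∀ t : ℝ, 0 < t → ∀ x : ℝ,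
      deriv (fun s => ρ s x) t + deriv (fun y => ρ t y * nlConv η ρ t y) x = 0)
    (hρ_init : ∀ x : ℝ, 0 ≤ x → ρ 0 x = 0) :
    ∀ t : ℝ, 0 ≤ t → ∀ x : ℝ, 0 ≤ x → ρ t x = 0 := by
  classical
  obtain ⟨M, hM⟩ := hρ_bdd
  have hM0 : 0 ≤ M := (abs_nonneg _).trans (hM 0 0)
  have hη1 : ContDiff ℝ 1 η := hη_smooth.of_le (by simp)
  have hηc : Continuous η := hη_smooth.continuous
  have hη'c : Continuous (deriv η) := hη_smooth.continuous_deriv (by simp)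
  have hη's : HasCompactSupport (deriv η) := hη_supp.deriv
  have hηint : Integrable η := hηc.integrable_of_hasCompactSupport hη_supp
  have hη'int : Integrable (deriv η) := hη'c.integrable_of_hasCompactSupport hη's
  have hρc : ContinuousOn (Function.uncurry ρ) (Ici (0:ℝ) ×ˢ (univ : Set ℝ)) :=
    hρ_reg.continuousOn
  have hρcont : ∀ t, 0 ≤ t → Continuous (ρ t) := by
    intro t ht
    rw [← continuousOn_univ]
    exact hρc.comp ((continuous_const.prodMk continuous_id).continuousOn)
      (fun x _ => ⟨ht, trivial⟩)
  have hmem : ∀ t x : ℝ, 0 < t → (Ici (0:ℝ) ×ˢ (univ : Set ℝ)) ∈ 𝓝 ((t, x) : ℝ × ℝ) := by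
    intro t x ht
    exact mem_of_superset ((isOpen_Ioi.prod isOpen_univ).mem_nhds ⟨ht, trivial⟩)
      (Set.prod_mono Ioi_subset_Ici_self le_rfl)
  set D : ℝ × ℝ → (ℝ × ℝ) →L[ℝ] ℝ := fderiv ℝ (Function.uncurry ρ) with hD_def
  have hDcont : ContinuousOn D (Ioi (0:ℝ) ×ˢ (univ : Set ℝ)) := by
    refine ContDiffOn.continuousOn_fderiv_of_isOpen
      (hρ_reg.mono (Set.prod_mono Ioi_subset_Ici_self le_rfl))
      (isOpen_Ioi.prod isOpen_univ) le_rfl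
  set ρt : ℝ → ℝ → ℝ := fun t x => D (t, x) (1, 0) with hρt_def
  set ρx : ℝ → ℝ → ℝ := fun t x => D (t, x) (0, 1) with hρx_def
  have hρt : ∀ t x : ℝ, 0 < t → HasDerivAt (fun s => ρ s x) (ρt t x) t := by
    intro t x ht
    have hd : DifferentiableAt ℝ (Function.uncurry ρ) (t, x) :=
      (hρ_reg.contDiffAt (hmem t x ht)).differentiableAt one_ne_zero
    have h1 : HasDerivAt (fun s : ℝ => ((s, x) : ℝ × ℝ)) (1, 0) t :=
      HasDerivAt.prodMk (hasDerivAt_id t) (hasDerivAt_const t x)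
    exact hd.hasFDerivAt.comp_hasDerivAt t h1
  have hρx : ∀ t x : ℝ, 0 < t → HasDerivAt (fun y => ρ t y) (ρx t x) x := by
    intro t x ht
    have hd : DifferentiableAt ℝ (Function.uncurry ρ) (t, x) :=
      (hρ_reg.contDiffAt (hmem t x ht)).differentiableAt one_ne_zero
    have h1 : HasDerivAt (fun y : ℝ => ((t, y) : ℝ × ℝ)) (0, 1) x :=
      HasDerivAt.prodMk (hasDerivAt_const x t) (hasDerivAt_id x)
    exact hd.hasFDerivAt.comp_hasDerivAt x h1
  have hslice : ∀ t : ℝ, 0 < t → ContinuousOn (fun x => D (t, x)) univ := by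
    intro t ht
    exact hDcont.comp ((continuous_const.prodMk continuous_id).continuousOn)
      (fun x _ => ⟨ht, trivial⟩)
  have hρtcont : ∀ t : ℝ, 0 < t → Continuous (fun x => ρt t x) := by
    intro t ht
    rw [← continuousOn_univ]
    exact ((ContinuousLinearMap.apply ℝ ℝ ((1:ℝ),(0:ℝ))).continuous).comp_continuousOn
      (hslice t ht)
  have hρxcont : ∀ t : ℝ, 0 < t → Continuous (fun x => ρx t x) := by
    intro t ht
    rw [← continuousOn_univ]
    exact ((ContinuousLinearMap.apply ℝ ℝ ((0:ℝ),(1:ℝ))).continuous).comp_continuousOn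
      (hslice t ht)
  have hρtbdd : ∀ a b c : ℝ, 0 < a → ∃ B : ℝ, ∀ s x : ℝ,
      s ∈ Icc a b → x ∈ Icc 0 c → |ρt s x| ≤ B := by
    intro a b c ha
    have hK : IsCompact ((Icc a b) ×ˢ (Icc (0:ℝ) c)) := (isCompact_Icc).prod isCompact_Icc
    have hsub : (Icc a b) ×ˢ (Icc (0:ℝ) c) ⊆ Ioi (0:ℝ) ×ˢ (univ : Set ℝ) := by
      intro p hp
      exact ⟨lt_of_lt_of_le ha hp.1.1, trivial⟩
    have hcont : ContinuousOn (fun p : ℝ × ℝ => ρt p.1 p.2) ((Icc a b) ×ˢ (Icc (0:ℝ) c)) := by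
      have := ((ContinuousLinearMap.apply ℝ ℝ ((1:ℝ),(0:ℝ))).continuous).comp_continuousOn
        (hDcont.mono hsub)
      exact this
    obtain ⟨B, hB⟩ := hK.exists_bound_of_continuousOn hcont
    exact ⟨B, fun s x hs hx => by simpa using hB (s, x) ⟨hs, hx⟩⟩
  set L : ℝ →L[ℝ] ℝ →L[ℝ] ℝ := ContinuousLinearMap.mul ℝ ℝ with hL_def
  have hVconv : ∀ t, nlConv η ρ t = (η ⋆[L] ρ t) := by
    intro t
    funext x
    rw [nlConv, convolution_def]
    simp only [hL_def, ContinuousLinearMap.mul_apply']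
    congr 1
    funext y
    ring
  set Vx : ℝ → ℝ → ℝ := fun t x => ((deriv η) ⋆[L] ρ t) x with hVx_def
  have hVd : ∀ t x : ℝ, 0 ≤ t → HasDerivAt (nlConv η ρ t) (Vx t x) x := by
    intro t x ht
    rw [hVconv t]
    exact hη_supp.hasDerivAt_convolution_left L hη1 ((hρcont t ht).locallyIntegrable) x
  have hVb : ∀ t x : ℝ, 0 ≤ t → |nlConv η ρ t x| ≤ M := by
    intro t x ht
    have hint : Integrable (fun y => ρ t (x - y) * η y) := by
      apply Continuous.integrable_of_hasCompactSupport
      · exact ((hρcont t ht).comp (continuous_const.sub continuous_id)).mul hηc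
      · exact hη_supp.mul_left
    rw [nlConv]
    calc |∫ y, ρ t (x - y) * η y| ≤ ∫ y, |ρ t (x - y)| * |η y| := by
          simpa [Real.norm_eq_abs] using norm_integral_le_integral_norm (fun y => ρ t (x - y) * η y)
    _ ≤ ∫ y, M * η y := by
          apply integral_mono (by simpa [abs_mul] using hint.abs) (hηint.const_mul M)
          intro y
          show |ρ t (x - y)| * |η y| ≤ M * η y
          rw [abs_of_nonneg (hη_nonneg y)]
          exact mul_le_mul_of_nonneg_right (hM t _) (hη_nonneg y)
    _ = M := by rw [MeasureTheory.integral_const_mul, hη_mass, mul_one]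
  have hVxb : ∀ t x : ℝ, 0 ≤ t → |Vx t x| ≤ M * ∫ y, |deriv η y| := by
    intro t x ht
    have hint : Integrable (fun y => deriv η y * ρ t (x - y)) := by
      apply Continuous.integrable_of_hasCompactSupport
      · exact hη'c.mul ((hρcont t ht).comp (continuous_const.sub continuous_id))
      · exact hη's.mul_right
    rw [hVx_def]
    simp only [convolution_def, hL_def, ContinuousLinearMap.mul_apply']
    calc |∫ y, deriv η y * ρ t (x - y)| ≤ ∫ y, |deriv η y| * |ρ t (x - y)| := by
          simpa [Real.norm_eq_abs] using
            norm_integral_le_integral_norm (fun y => deriv η y * ρ t (x - y))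
    _ ≤ ∫ y, |deriv η y| * M := by
          apply integral_mono (by simpa [abs_mul] using hint.abs) (hη'int.abs.mul_const M)
          intro y
          show |deriv η y| * |ρ t (x - y)| ≤ |deriv η y| * M
          exact mul_le_mul_of_nonneg_left (hM t _) (abs_nonneg _)
    _ = M * ∫ y, |deriv η y| := by rw [MeasureTheory.integral_mul_const]; ring
  have hVcont : ∀ t : ℝ, 0 ≤ t → Continuous (nlConv η ρ t) := by
    intro t ht
    rw [continuous_iff_continuousAt]
    exact fun x => (hVd t x ht).continuousAt
  have hVxcont : ∀ t : ℝ, 0 ≤ t → Continuous (Vx t) := by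
    intro t ht
    exact hη's.continuous_convolution_left L hη'c ((hρcont t ht).locallyIntegrable)
  have hPDE : ∀ t x : ℝ, 0 < t →
      ρt t x = -(ρx t x * nlConv η ρ t x + ρ t x * Vx t x) := by
    intro t x ht
    have h1 := hρ_pde t ht x
    have hd2 : HasDerivAt (fun y => ρ t y * nlConv η ρ t y)
        (ρx t x * nlConv η ρ t x + ρ t x * Vx t x) x :=
      (hρx t x ht).mul (hVd t x ht.le)
    rw [(hρt t x ht).deriv, hd2.deriv] at h1
    linarith
  -- kernel sup bound
  obtain ⟨Cη₀, hCη₀⟩ := hη_supp.exists_bound_of_continuous hηc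
  set Cη : ℝ := max Cη₀ 1 with hCη_def
  have hCη1 : (1:ℝ) ≤ Cη := le_max_right _ _
  have hCη : ∀ y, η y ≤ Cη := fun y =>
    (le_abs_self _).trans ((hCη₀ y).trans (le_max_left _ _))
  set Iη' : ℝ := ∫ y, |deriv η y| with hIη'_def
  have hIη'0 : 0 ≤ Iη' := integral_nonneg fun y => abs_nonneg _
  -- boundary estimate
  have hV0 := aux_V0 ε hε η hη_nonneg hη_pos hη_eps ρ M hM hM0 hηc hη_supp hηint hρcont
    Cη hCη1 hCη
  -- constants
  set K : ℝ := Cη * Real.exp ε * (M + 1) + (M + 2 * (M * Iη')) with hK_def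
  have hKpos : 0 < K := by
    have hCV : 0 < Cη * Real.exp ε :=
      mul_pos (lt_of_lt_of_le zero_lt_one hCη1) (Real.exp_pos ε)
    nlinarith [mul_pos hCV (show (0:ℝ) < M + 1 by linarith), mul_nonneg hM0 hIη'0]
  -- the main Gronwall estimate
  have main : ∀ δ : ℝ, 0 < δ → δ ≤ 1 → ∀ R : ℝ, ε ≤ R → ∀ T : ℝ, 0 < T →
      (∫ x in (0:ℝ)..R, Real.sqrt ((ρ T x) ^ 2 + δ ^ 2) * Real.exp (-x)) ≤
        gronwallBound δ K ((M + 1) * M * Real.exp (-R)) T := by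
    intro δ hδ hδ1 R hR T hT
    have hR0 : (0:ℝ) ≤ R := le_trans hε.le hR
    obtain ⟨hE0, hEc⟩ := aux_energy_zero_and_cont ρ M hM hM0 hρc hρcont hρ_init δ R hδ hδ1 hR0
    have hGnn : ∀ s : ℝ, 0 ≤ s →
        0 ≤ ∫ x in (0:ℝ)..R, Real.sqrt ((ρ s x) ^ 2 + δ ^ 2) * Real.exp (-x) := by
      intro s _
      exact intervalIntegral.integral_nonneg hR0
        (fun u _ => mul_nonneg (Real.sqrt_nonneg _) (Real.exp_pos _).le)
    refine aux_gronwall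
      (fun s => ∫ x in (0:ℝ)..R, Real.sqrt ((ρ s x) ^ 2 + δ ^ 2) * Real.exp (-x))
      (fun s => ∫ x in (0:ℝ)..R,
        ρ s x / Real.sqrt ((ρ s x) ^ 2 + δ ^ 2) * ρt s x * Real.exp (-x))
      K ((M + 1) * M * Real.exp (-R)) δ hδ hKpos (by positivity)
      (fun s hs => aux_energy_hasDeriv ρ M hM hM0 hρcont ρt hρt hρtcont
        (fun a b c ha => hρtbdd a b c ha) δ R hδ hR0 s hs)
      (fun s hs => by
        have hb := aux_energy_deriv_bound ρ M (M * Iη') (Cη * Real.exp ε) hM hM0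
          (mul_nonneg hM0 hIη'0)
          (mul_nonneg (by linarith) (Real.exp_pos ε).le)
          hρcont ρt ρx hρx hρxcont (nlConv η ρ) Vx hVd hVb hVxb hVxcont hPDE
          δ R hδ hδ1 hR0 s hs (hV0 s hs.le δ hδ R hR)
        rw [hK_def]
        exact hb)
      (fun s hs => hGnn s hs) hE0 hEc T hT
  -- conclusion
  intro t ht x hx
  rcases eq_or_lt_of_le ht with h0 | ht'
  · rw [← h0]; exact hρ_init x hx
  by_contra hne
  exact aux_conclusion ε hε ρ M K hM0 hKpos hρcont main t ht' x hx hne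
end

section
/- Fix an integer ℓ ≥ 1, real weights γ_k ≥ 0 for k ∈ {−ℓ,…,ℓ−1} with γ_k = 0 whenever k ≥ 0, and λ > 0. Let (ρ_j^n)_{j∈ℤ, n∈ℕ} be generated by the nonlocal Godunov scheme: V_{j+1/2}^n = Σ_{k=−ℓ}^{ℓ−1} γ_k ρ_{j−k+1}^n, F_{j+1/2}^n = V_{j+1/2}^n ρ_j^n if V_{j+1/2}^n ≥ 0 and F_{j+1/2}^n = V_{j+1/2}^n ρ_{j+1}^n otherwise, and ρ_j^{n+1} = ρ_j^n − λ (F_{j+1/2}^n − F_{j−1/2}^n). If ρ_j^0 = 0 for every j ≥ 0, then ρ_j^n = 0 for every j ≥ 0 and every n ≥ 0. That is, the Godunov type scheme with quadrature weights coming from a kernel supported on the negative real line preserves the property that the discrete solution vanishes on the nonnegative indices. -/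
/-! Since `γ_k = 0` for `k ≥ 0`, the velocity `V_{j+1/2}` only reads `ρ` at indices `≥ j + 2`.
So as long as `ρ` vanishes on the nonnegative indices, the velocity, and with it the flux,
vanishes at every interface `j + 1/2` with `j ≥ -1`: no mass ever enters `{j ≥ 0}`. -/

/-- The discrete convolution `V_{j+1/2} = Σ_{k=−ℓ}^{ℓ−1} γ_k ρ_{j−k+1}`. -/
noncomputable def discV (ℓ : ℕ) (γ : ℤ → ℝ) (ρ : ℤ → ℝ) (j : ℤ) : ℝ :=
  ∑ k ∈ Finset.Icc (-(ℓ:ℤ)) ((ℓ:ℤ) - 1), γ k * ρ (j - k + 1)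

/-- The nonlocal Godunov numerical flux `F_{j+1/2}`. -/
noncomputable def godFlux (ℓ : ℕ) (γ : ℤ → ℝ) (ρ : ℤ → ℝ) (j : ℤ) : ℝ :=
  if 0 ≤ discV ℓ γ ρ j then discV ℓ γ ρ j * ρ j else discV ℓ γ ρ j * ρ (j + 1)

theorem discV_eq_zero_of_eq_zero_of_lt (ℓ : ℕ) (γ : ℤ → ℝ)
    (hγ_zero : ∀ k ∈ Finset.Icc (-(ℓ:ℤ)) ((ℓ:ℤ) - 1), 0 ≤ k → γ k = 0)
    (ρ : ℤ → ℝ) (j : ℤ) (hρ : ∀ i, j + 1 < i → ρ i = 0) :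
    discV ℓ γ ρ j = 0 := by
  refine Finset.sum_eq_zero fun k hk => ?_
  rcases le_or_gt 0 k with hk_nonneg | hk_neg
  · rw [hγ_zero k hk hk_nonneg, zero_mul]
  · rw [hρ (j - k + 1) (by omega), mul_zero]

theorem godFlux_eq_zero_of_discV_eq_zero (ℓ : ℕ) (γ ρ : ℤ → ℝ) (j : ℤ)
    (hV : discV ℓ γ ρ j = 0) : godFlux ℓ γ ρ j = 0 := by
  simp [godFlux, hV]

theorem godunov_preserves_vanishing_on_nonneg_indices_general (ℓ : ℕ)
    (γ : ℤ → ℝ)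
    (hγ_zero : ∀ k ∈ Finset.Icc (-(ℓ:ℤ)) ((ℓ:ℤ) - 1), 0 ≤ k → γ k = 0)
    (lam : ℝ) (ρ : ℕ → ℤ → ℝ)
    (hstep : ∀ n : ℕ, ∀ j : ℤ,
      ρ (n + 1) j = ρ n j - lam * (godFlux ℓ γ (ρ n) j - godFlux ℓ γ (ρ n) (j - 1)))
    (hinit : ∀ j : ℤ, 0 ≤ j → ρ 0 j = 0) :
    ∀ n : ℕ, ∀ j : ℤ, 0 ≤ j → ρ n j = 0 := by
  intro n
  induction n with
  | zero => exact hinit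
  | succ n ih =>
    have hF : ∀ i : ℤ, -1 ≤ i → godFlux ℓ γ (ρ n) i = 0 := fun i hi =>
      godFlux_eq_zero_of_discV_eq_zero ℓ γ (ρ n) i <|
        discV_eq_zero_of_eq_zero_of_lt ℓ γ hγ_zero (ρ n) i fun i' hi' => ih i' (by omega)
    intro j hj
    rw [hstep n j, hF j (by omega), hF (j - 1) (by omega), ih j hj]
    ring

/-- The nonlocal Godunov scheme with nonnegative quadrature weights vanishing for
`k ≥ 0` (kernel supported on the negative real line) preserves the property that the
discrete solution vanishes on the nonnegative indices. -/
theorem godunov_preserves_vanishing_on_nonneg_indices (ℓ : ℕ) (hℓ : 1 ≤ ℓ)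
    (γ : ℤ → ℝ) (hγ_nonneg : ∀ k ∈ Finset.Icc (-(ℓ:ℤ)) ((ℓ:ℤ) - 1), 0 ≤ γ k)
    (hγ_zero : ∀ k ∈ Finset.Icc (-(ℓ:ℤ)) ((ℓ:ℤ) - 1), 0 ≤ k → γ k = 0)
    (lam : ℝ) (hlam : 0 < lam) (ρ : ℕ → ℤ → ℝ)
    (hstep : ∀ n : ℕ, ∀ j : ℤ,
      ρ (n + 1) j = ρ n j - lam * (godFlux ℓ γ (ρ n) j - godFlux ℓ γ (ρ n) (j - 1)))
    (hinit : ∀ j : ℤ, 0 ≤ j → ρ 0 j = 0) :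
    ∀ n : ℕ, ∀ j : ℤ, 0 ≤ j → ρ n j = 0 :=
  godunov_preserves_vanishing_on_nonneg_indices_general ℓ γ hγ_zero lam ρ hstep hinit
end
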